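/- arXiv:0705.3920 — 3 statements merged into one kernel-verified Lean document; each statement's English description precedes it below -/
import Mathlib

section
/- Let C be a convex cone in ℝⁿ with l(C) ≠ {0}. Then the closure of C decomposes as the Minkowski sum (cl(C) ∩ l(C)^⊥) + l(C), and moreover cl(C) ∩ l(C)^⊥ is a line-free convex cone. -/
open Pointwise

/-!
Since `l(C) ⊆ cl C` and `cl C` is a convex cone, `cl C` is invariant under translation by `l(C)`;
splitting `x ∈ cl C` along `l(C) ⊕ l(C)^⊥` then gives the decomposition. A line `x + ℝ z` in the
closed cone `cl C` forces `ℝ z ⊆ cl C` (rescale `x + (t / c) z` by `c → 0⁺`), so `l(C) + ℝ z` is a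
subspace of `cl C`; by maximality `z ∈ l(C)`, and if also `z ∈ l(C)^⊥` then `z = 0`.
-/

def ConvexCone.ofConvex {𝕜 E : Type*} [Field 𝕜] [LinearOrder 𝕜] [IsStrictOrderedRing 𝕜]
    [AddCommGroup E] [Module 𝕜 E] {s : Set E} (hconv : Convex 𝕜 s)
    (hcone : ∀ x ∈ s, ∀ a : 𝕜, 0 < a → a • x ∈ s) : ConvexCone 𝕜 E where
  carrier := s
  smul_mem' c hc x hx := hcone x hx c hc
  add_mem' x hx y hy := by
    have hmid := hconv hx hy (by norm_num : (0 : 𝕜) ≤ 1 / 2) (by norm_num : (0 : 𝕜) ≤ 1 / 2)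
      (add_halves 1)
    have h := hcone _ hmid 2 two_pos
    rwa [smul_add, smul_smul, smul_smul, mul_one_div_cancel two_ne_zero, one_smul, one_smul] at h

namespace ConvexCone

theorem span_singleton_sup_subset {𝕜 E : Type*} [Field 𝕜] [LinearOrder 𝕜]
    [IsStrictOrderedRing 𝕜] [AddCommGroup E] [Module 𝕜 E] (K : ConvexCone 𝕜 E)
    {L : Submodule 𝕜 E} (hL : (L : Set E) ⊆ K) {z : E} (hz : ∀ t : 𝕜, t • z ∈ K) :
    ((L ⊔ 𝕜 ∙ z : Submodule 𝕜 E) : Set E) ⊆ K := by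
  intro w hw
  obtain ⟨u, hu, v, hv, rfl⟩ := Submodule.mem_sup.mp hw
  obtain ⟨t, rfl⟩ := Submodule.mem_span_singleton.mp hv
  exact K.add_mem (hL hu) (hz t)

theorem smul_mem_of_forall_add_smul_mem {E : Type*} [AddCommGroup E] [Module ℝ E]
    [TopologicalSpace E] [ContinuousAdd E] [ContinuousSMul ℝ E] (K : ConvexCone ℝ E)
    (hK : IsClosed (K : Set E)) {x z : E} (hline : ∀ t : ℝ, x + t • z ∈ K) (t : ℝ) :
    t • z ∈ K := by
  have hlim : Filter.Tendsto (fun c : ℝ => c • x + t • z) (nhdsWithin 0 (Set.Ioi 0))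
      (nhds (t • z)) := by
    have hcont : Continuous fun c : ℝ => c • x + t • z := by fun_prop
    simpa using (hcont.tendsto 0).mono_left nhdsWithin_le_nhds
  refine hK.mem_of_tendsto hlim (eventually_mem_nhdsWithin.mono fun c (hc : 0 < c) => ?_)
  have h := K.smul_mem hc (hline (t / c))
  rwa [smul_add, smul_smul, mul_div_cancel₀ t hc.ne'] at h

variable {E : Type*} [NormedAddCommGroup E] [InnerProductSpace ℝ E]

theorem eq_inter_orthogonal_add (K : ConvexCone ℝ E) (L : Submodule ℝ E)
    [L.HasOrthogonalProjection] (hL : (L : Set E) ⊆ K) :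
    (K : Set E) = ((K : Set E) ∩ Lᗮ) + L := by
  ext x
  constructor
  · intro hx
    have hperp : x - L.starProjection x ∈ K :=
      sub_eq_add_neg x _ ▸ K.add_mem hx (hL (L.neg_mem (L.starProjection_apply_mem x)))
    exact ⟨_, ⟨hperp, L.sub_starProjection_mem_orthogonal x⟩, _,
      L.starProjection_apply_mem x, sub_add_cancel _ _⟩
  · rintro ⟨y, ⟨hy, -⟩, u, hu, rfl⟩
    exact K.add_mem hy (hL hu)

theorem eq_zero_of_forall_add_smul_mem_inter_orthogonal (K : ConvexCone ℝ E)
    (hK : IsClosed (K : Set E)) {L : Submodule ℝ E} (hL : (L : Set E) ⊆ K)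
    (hmax : ∀ L' : Submodule ℝ E, (L' : Set E) ⊆ K → L' ≤ L) {x z : E}
    (hline : ∀ t : ℝ, x + t • z ∈ (K : Set E) ∩ Lᗮ) : z = 0 := by
  have hzperp : z ∈ Lᗮ := by
    simpa using Lᗮ.sub_mem (hline 1).2 (hline 0).2
  have hzL : z ∈ L :=
    hmax _ (K.span_singleton_sup_subset hL
      (K.smul_mem_of_forall_add_smul_mem hK fun t => (hline t).1))
      (Submodule.mem_sup_right (Submodule.mem_span_singleton_self z))
  exact (Submodule.mem_bot ℝ).mp ((Submodule.orthogonal_disjoint L).le_bot ⟨hzL, hzperp⟩)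

end ConvexCone

theorem stmt2_general (n : ℕ) (C : Set (EuclideanSpace ℝ (Fin n)))
    (hcone : ∀ x ∈ C, ∀ a : ℝ, 0 < a → a • x ∈ C)
    (hconv : Convex ℝ C)
    (L : Submodule ℝ (EuclideanSpace ℝ (Fin n)))
    (hL : (L : Set (EuclideanSpace ℝ (Fin n))) ⊆ closure C)
    (hmax : ∀ L' : Submodule ℝ (EuclideanSpace ℝ (Fin n)),
      (L' : Set (EuclideanSpace ℝ (Fin n))) ⊆ closure C → L' ≤ L) :
    closure C = (closure C ∩ (Lᗮ : Set (EuclideanSpace ℝ (Fin n))))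
        + (L : Set (EuclideanSpace ℝ (Fin n))) ∧
    Convex ℝ (closure C ∩ (Lᗮ : Set (EuclideanSpace ℝ (Fin n)))) ∧
    (∀ x ∈ closure C ∩ (Lᗮ : Set (EuclideanSpace ℝ (Fin n))), ∀ a : ℝ, 0 < a →
      a • x ∈ closure C ∩ (Lᗮ : Set (EuclideanSpace ℝ (Fin n)))) ∧
    ¬ ∃ (x z : EuclideanSpace ℝ (Fin n)), z ≠ 0 ∧
      ∀ t : ℝ, x + t • z ∈ closure C ∩ (Lᗮ : Set (EuclideanSpace ℝ (Fin n))) := by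
  let K := (ConvexCone.ofConvex hconv hcone).closure
  let K₀ := K ⊓ Lᗮ.toConvexCone
  refine ⟨K.eq_inter_orthogonal_add L hL, K₀.convex, fun x hx a ha => K₀.smul_mem ha hx, ?_⟩
  rintro ⟨x, z, hz, hline⟩
  exact hz (K.eq_zero_of_forall_add_smul_mem_inter_orthogonal isClosed_closure hL hmax hline)

/-- Decomposition theorem: if `l(C) ≠ {0}`, then
`cl C = (cl C ∩ l(C)^⊥) + l(C)` and `cl C ∩ l(C)^⊥` is a line-free convex cone. -/
theorem stmt2 (n : ℕ) (C : Set (EuclideanSpace ℝ (Fin n)))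
    (hcone : ∀ x ∈ C, ∀ a : ℝ, 0 < a → a • x ∈ C)
    (hconv : Convex ℝ C)
    (L : Submodule ℝ (EuclideanSpace ℝ (Fin n)))
    (hL : (L : Set (EuclideanSpace ℝ (Fin n))) ⊆ closure C)
    (hmax : ∀ L' : Submodule ℝ (EuclideanSpace ℝ (Fin n)),
      (L' : Set (EuclideanSpace ℝ (Fin n))) ⊆ closure C → L' ≤ L)
    (hne : L ≠ ⊥) :
    closure C = (closure C ∩ (Lᗮ : Set (EuclideanSpace ℝ (Fin n))))
        + (L : Set (EuclideanSpace ℝ (Fin n))) ∧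
    Convex ℝ (closure C ∩ (Lᗮ : Set (EuclideanSpace ℝ (Fin n)))) ∧
    (∀ x ∈ closure C ∩ (Lᗮ : Set (EuclideanSpace ℝ (Fin n))), ∀ a : ℝ, 0 < a →
      a • x ∈ closure C ∩ (Lᗮ : Set (EuclideanSpace ℝ (Fin n)))) ∧
    ¬ ∃ (x z : EuclideanSpace ℝ (Fin n)), z ≠ 0 ∧
      ∀ t : ℝ, x + t • z ∈ closure C ∩ (Lᗮ : Set (EuclideanSpace ℝ (Fin n))) :=
  stmt2_general n C hcone hconv L hL hmax
end

section
/- If P is a polyhedral cone in ℝⁿ (a finite intersection of closed linear halfspaces), then its dual cone P* is also a polyhedral cone. -/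
/-!
The conic hull of finitely many vectors in a finite-dimensional space is cut out by finitely
many linear inequalities (Weyl). This goes by Fourier–Motzkin elimination: `x` lies in the hull
of `insert v s` iff `x - t • v` lies in the hull of `s` for some `t ≥ 0`, and eliminating `t`
from the resulting system pairs every constraint in which `t` has a positive coefficient with
every constraint in which it has a negative one.

Apply this in the dual space to the functionals `fᵢ` defining `P`: by reflexivity, their conic
hull `C` is `{u | ∀ j, u wⱼ ≤ 0}` for finitely many vectors `wⱼ`. Since every `fᵢ` lies in `C`,
every `wⱼ` lies in `P`, hence `C ⊆ P* ⊆ {u | ∀ j, u wⱼ ≤ 0} = C`.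
-/

open Finset Module

variable {𝕜 M : Type*} [Field 𝕜] [LinearOrder 𝕜] [IsStrictOrderedRing 𝕜]
  [AddCommGroup M] [Module 𝕜 M]

theorem exists_nonneg_forall_le_mul_iff {α : Type*} (s : Finset α) (a b : α → 𝕜) :
    (∃ t, 0 ≤ t ∧ ∀ j ∈ s, b j ≤ t * a j) ↔
      (∀ j ∈ s, a j ≤ 0 → b j ≤ 0) ∧
        ∀ j ∈ s, 0 < a j → ∀ k ∈ s, a k < 0 → a j * b k ≤ a k * b j := by
  constructor
  · rintro ⟨t, ht, h⟩
    refine ⟨fun j hj haj => ?_, fun j hj haj k hk hak => ?_⟩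
    · nlinarith [h j hj]
    · nlinarith [h j hj, h k hk]
  · rintro ⟨hnonpos, hpair⟩
    classical
    let lower := insert 0 ((s.filter (0 < a ·)).image fun j => b j / a j)
    have hlower : lower.Nonempty := insert_nonempty _ _
    refine ⟨lower.max' hlower, le_max' _ _ (mem_insert_self _ _), fun k hk => ?_⟩
    rcases lt_trichotomy (a k) 0 with hak | hak | hak
    · suffices lower.max' hlower ≤ b k / a k by rwa [le_div_iff_of_neg hak] at this
      refine max'_le _ _ _ fun y hy => ?_
      obtain rfl | ⟨j, hj, rfl⟩ := by simpa [lower] using hy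
      · exact div_nonneg_of_nonpos (hnonpos k hk hak.le) hak.le
      · rw [le_div_iff_of_neg hak, div_mul_eq_mul_div, le_div_iff₀ hj.2]
        linarith [hpair j hj.1 hj.2 k hk hak]
    · simpa [hak] using hnonpos k hk hak.le
    · have hk' : b k / a k ∈ lower :=
        mem_insert_of_mem (mem_image_of_mem (fun j => b j / a j) (mem_filter.2 ⟨hk, hak⟩))
      simpa only [div_le_iff₀ hak] using le_max' _ _ hk'

open Classical in
/-- The constraints left after eliminating `t` from `∀ w ∈ W, w x ≤ t * w v`. -/
noncomputable def fourierMotzkin (W : Finset (Dual 𝕜 M)) (v : M) : Finset (Dual 𝕜 M) :=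
  W.filter (· v ≤ 0) ∪
    ((W.filter (0 < · v)) ×ˢ (W.filter (· v < 0))).image fun p => p.1 v • p.2 - p.2 v • p.1

theorem forall_mem_fourierMotzkin_apply_nonpos_iff (W : Finset (Dual 𝕜 M)) (v x : M) :
    (∀ w ∈ fourierMotzkin W v, w x ≤ 0) ↔ ∃ t, 0 ≤ t ∧ ∀ w ∈ W, w x ≤ t * w v := by
  rw [exists_nonneg_forall_le_mul_iff]
  simp only [fourierMotzkin, forall_mem_union, forall_mem_image, Prod.forall, mem_product,
    mem_filter, and_imp, LinearMap.sub_apply, LinearMap.smul_apply, smul_eq_mul, sub_nonpos]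
  aesop

namespace PointedCone

theorem mem_hull_insert_iff {s : Set M} {v x : M} :
    x ∈ hull 𝕜 (insert v s) ↔ ∃ t : 𝕜, 0 ≤ t ∧ x - t • v ∈ hull 𝕜 s := by
  rw [Submodule.mem_span_insert]
  constructor
  · rintro ⟨t, z, hz, rfl⟩
    exact ⟨t, t.2, by simpa [Nonneg.coe_smul] using hz⟩
  · rintro ⟨t, ht, hx⟩
    exact ⟨⟨t, ht⟩, _, hx, by simp [Nonneg.mk_smul]⟩

theorem exists_finset_mem_hull_iff [FiniteDimensional 𝕜 M] {s : Set M} (hs : s.Finite) :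
    ∃ W : Finset (Dual 𝕜 M), ∀ x, x ∈ hull 𝕜 s ↔ ∀ w ∈ W, w x ≤ 0 := by
  classical
  induction s, hs using Set.Finite.induction_on with
  | empty =>
    let b := Module.finBasis 𝕜 M
    refine ⟨univ.image b.coord ∪ univ.image (-b.coord ·), fun x => ?_⟩
    simp only [Submodule.span_empty, Submodule.mem_bot, mem_union, mem_image, mem_univ, true_and]
    constructor
    · rintro rfl w hw
      obtain ⟨i, rfl⟩ | ⟨i, rfl⟩ := hw <;> simp
    · intro h
      refine b.forall_coord_eq_zero_iff.1 fun i => le_antisymm (h _ (.inl ⟨i, rfl⟩)) ?_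
      simpa using h _ (.inr ⟨i, rfl⟩)
  | @insert v s _ _ ih =>
    obtain ⟨W, hW⟩ := ih
    refine ⟨fourierMotzkin W v, fun x => ?_⟩
    rw [mem_hull_insert_iff, forall_mem_fourierMotzkin_apply_nonpos_iff]
    simp only [hW, map_sub, map_smul, smul_eq_mul, sub_nonpos]

theorem apply_nonpos_of_mem_hull {s : Set (Dual 𝕜 M)} {u : Dual 𝕜 M} (hu : u ∈ hull 𝕜 s)
    {x : M} (hx : ∀ f ∈ s, f x ≤ 0) : u x ≤ 0 := by
  induction hu using Submodule.span_induction with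
  | mem f hf => exact hx f hf
  | zero => simp
  | add f g _ _ hf hg => simpa using add_nonpos hf hg
  | smul c f _ hf => simpa [← Nonneg.coe_smul] using mul_nonpos_of_nonneg_of_nonpos c.2 hf

theorem exists_finset_forall_nonpos_iff [FiniteDimensional 𝕜 M] {ι : Type*} [Finite ι]
    (f : ι → Dual 𝕜 M) :
    ∃ S : Finset M, ∀ u : Dual 𝕜 M,
      (∀ x, (∀ i, f i x ≤ 0) → u x ≤ 0) ↔ ∀ w ∈ S, u w ≤ 0 := by
  classical
  obtain ⟨W, hW⟩ := exists_finset_mem_hull_iff (𝕜 := 𝕜) (Set.finite_range f)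
  let S := W.image (evalEquiv 𝕜 M).symm
  have hS : ∀ u, u ∈ hull 𝕜 (Set.range f) ↔ ∀ w ∈ S, u w ≤ 0 := by
    simpa only [S, forall_mem_image, apply_evalEquiv_symm_apply] using hW
  refine ⟨S, fun u => ⟨fun hu w hw => hu w fun i => ?_, fun hu x hx => ?_⟩⟩
  · exact (hS (f i)).1 (subset_hull ⟨i, rfl⟩) w hw
  · exact apply_nonpos_of_mem_hull ((hS u).2 hu) (by simpa using hx)

end PointedCone

theorem stmt7_general (n m : ℕ) (f : Fin m → StrongDual ℝ (EuclideanSpace ℝ (Fin n)))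
    (P : Set (EuclideanSpace ℝ (Fin n)))
    (hP : P = ⋂ i, {x : EuclideanSpace ℝ (Fin n) | f i x ≤ 0}) :
    ∃ (k : ℕ) (g : Fin k → StrongDual ℝ (StrongDual ℝ (EuclideanSpace ℝ (Fin n)))),
      (∀ j, g j ≠ 0) ∧
      {u : StrongDual ℝ (EuclideanSpace ℝ (Fin n)) | ∀ x ∈ P, u x ≤ 0} =
        ⋂ j, {u : StrongDual ℝ (EuclideanSpace ℝ (Fin n)) | g j u ≤ 0} := by
  classical
  obtain ⟨S, hS⟩ := PointedCone.exists_finset_forall_nonpos_iff fun i => (f i).toLinearMap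
  let w := (S.erase 0).equivFin.symm
  refine ⟨#(S.erase 0), fun j => NormedSpace.inclusionInDoubleDual ℝ _ (w j), fun j hj => ?_, ?_⟩
  · refine (mem_erase.1 (w j).2).1 (SeparatingDual.eq_zero_of_forall_dual_eq_zero (R := ℝ) ?_)
    exact fun u => by simpa using congr($hj u)
  · ext u
    simp only [hP, Set.mem_ofPred_eq, Set.mem_iInter, NormedSpace.dual_def]
    refine (hS u).trans ?_
    rw [w.forall_congr_right (q := fun x : S.erase 0 => u x ≤ 0)]
    simp only [Subtype.forall, mem_erase, ne_eq, and_imp]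
    refine ⟨fun h x _ hx => h x hx, fun h x hx => ?_⟩
    obtain rfl | hx0 := eq_or_ne x 0
    · simp
    · exact h x hx0 hx

/-- The dual cone of a polyhedral cone (a finite intersection of closed linear
halfspaces) in `ℝⁿ` is again a polyhedral cone (in the dual space). -/
theorem stmt7 (n m : ℕ) (f : Fin m → StrongDual ℝ (EuclideanSpace ℝ (Fin n)))
    (hf : ∀ i, f i ≠ 0)
    (P : Set (EuclideanSpace ℝ (Fin n)))
    (hP : P = ⋂ i, {x : EuclideanSpace ℝ (Fin n) | f i x ≤ 0}) :
    ∃ (k : ℕ) (g : Fin k → StrongDual ℝ (StrongDual ℝ (EuclideanSpace ℝ (Fin n)))),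
      (∀ j, g j ≠ 0) ∧
      {u : StrongDual ℝ (EuclideanSpace ℝ (Fin n)) | ∀ x ∈ P, u x ≤ 0} =
        ⋂ j, {u : StrongDual ℝ (EuclideanSpace ℝ (Fin n)) | g j u ≤ 0} :=
  stmt7_general n m f P hP
end

section
/- Let P be an n-dimensional polyhedral cone in ℝⁿ, let f be a face of P, and let e be a face of f. Define f_{(e;P)} = Lk(e;P) ∩ L(f), where L(f) is the linear span of f and Lk(e;P) is the link of e in P. Then f_{(e;P)} is a face of the polytopal cone Lk(e;P); moreover, if f is a facet of P then f_{(e;P)} is a facet of Lk(e;P). -/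
open scoped RealInnerProductSpace

/-- A (nonempty, proper) face of a convex cone `C ⊆ ℝⁿ`: the intersection of `C` with a
supporting hyperplane. -/
def IsFaceCone (n : ℕ) (C f : Set (EuclideanSpace ℝ (Fin n))) : Prop :=
  f.Nonempty ∧ f ≠ C ∧ ∃ w : EuclideanSpace ℝ (Fin n), w ≠ 0 ∧
    (∀ x ∈ C, ⟪w, x⟫ ≤ 0) ∧ f = {x ∈ C | ⟪w, x⟫ = 0}

/-- A facet of a cone: a maximal face. -/
def IsFacetCone (n : ℕ) (C f : Set (EuclideanSpace ℝ (Fin n))) : Prop :=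
  IsFaceCone n C f ∧ ∀ g, IsFaceCone n C g → f ⊆ g → g = f

/-- The link `Lk(g;P)` of a face `g` of the polyhedral cone `P = ⋂ᵢ {x | ⟪u i, x⟫ ≤ 0}`:
the intersection of the defining halfspaces whose bounding hyperplane contains `g`,
intersected with the orthogonal complement of the linear span `L(g)` of `g`. -/
def lkCone (n m : ℕ) (u : Fin m → EuclideanSpace ℝ (Fin n))
    (g : Set (EuclideanSpace ℝ (Fin n))) : Set (EuclideanSpace ℝ (Fin n)) :=
  (⋂ i ∈ {i : Fin m | ∀ x ∈ g, ⟪u i, x⟫ = 0}, {x : EuclideanSpace ℝ (Fin n) | ⟪u i, x⟫ ≤ 0}) ∩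
    ((Submodule.span ℝ g)ᗮ : Set (EuclideanSpace ℝ (Fin n)))

/-!
Pick a relative interior point `z` of `e`. Every `x` in the cone `P_e` of constraints active on
`e` satisfies `z + t • x ∈ P` for small `t > 0`. Hence a support vector `w` of `f` (which vanishes
at `z`) supports `P_e`, and `P_e ∩ {⟪w, ·⟫ = 0}` lies in `L(f)`, so `Lk(e;P) ∩ L(f)` is the face
of the link cut out by `w`.
-/

open Set Topology Submodule

section Polyhedral

variable {V ι : Type*} [NormedAddCommGroup V] [InnerProductSpace ℝ V] (u : ι → V)

def polyhedralCone : Set V := ⋂ i, {x | ⟪u i, x⟫ ≤ 0}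

/-- The cone `P_s` cut out by the defining halfspaces whose boundary contains `s`. -/
def activeCone (s : Set V) : Set V :=
  ⋂ i ∈ {i | ∀ x ∈ s, ⟪u i, x⟫ = 0}, {x | ⟪u i, x⟫ ≤ 0}

/-- For a face `e` of `polyhedralCone u` these are exactly the relative interior points of `e`. -/
def IsRelintPoint (e : Set V) (z : V) : Prop :=
  z ∈ e ∧ ∀ i, ⟪u i, z⟫ = 0 → ∀ y ∈ e, ⟪u i, y⟫ = 0

variable {u}

lemma mem_polyhedralCone {x : V} : x ∈ polyhedralCone u ↔ ∀ i, ⟪u i, x⟫ ≤ 0 := by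
  simp [polyhedralCone]

lemma zero_mem_polyhedralCone : (0 : V) ∈ polyhedralCone u :=
  mem_polyhedralCone.2 fun i => (inner_zero_right (u i)).le

lemma add_mem_polyhedralCone {x y : V} (hx : x ∈ polyhedralCone u) (hy : y ∈ polyhedralCone u) :
    x + y ∈ polyhedralCone u :=
  mem_polyhedralCone.2 fun i => by
    rw [inner_add_right]
    exact add_nonpos (mem_polyhedralCone.1 hx i) (mem_polyhedralCone.1 hy i)

lemma mem_activeCone {s : Set V} {x : V} :
    x ∈ activeCone u s ↔ ∀ i, (∀ y ∈ s, ⟪u i, y⟫ = 0) → ⟪u i, x⟫ ≤ 0 := by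
  simp [activeCone]

lemma polyhedralCone_subset_activeCone (s : Set V) : polyhedralCone u ⊆ activeCone u s :=
  fun _ hx => mem_activeCone.2 fun i _ => mem_polyhedralCone.1 hx i

lemma mem_span_of_add_smul_mem {s : Set V} {z x : V} {t : ℝ} (ht : t ≠ 0) (hz : z ∈ s)
    (hzx : z + t • x ∈ s) : x ∈ span ℝ s := by
  have hx : x = t⁻¹ • ((z + t • x) - z) := by
    rw [add_sub_cancel_left, smul_smul, inv_mul_cancel₀ ht, one_smul]
  rw [hx]
  exact smul_mem _ _ (sub_mem (subset_span hzx) (subset_span hz))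

lemma mem_orthogonal_span_iff {s : Set V} {w : V} :
    w ∈ (span ℝ s)ᗮ ↔ ∀ y ∈ s, ⟪w, y⟫ = 0 := by
  rw [mem_orthogonal']
  refine ⟨fun h y hy => h y (subset_span hy), fun h x hx => ?_⟩
  induction hx using span_induction with
  | mem y hy => exact h y hy
  | zero => exact inner_zero_right w
  | add a b _ _ ha hb => rw [inner_add_right, ha, hb, add_zero]
  | smul c a _ ha => rw [inner_smul_right, ha, mul_zero]

lemma inner_starProjection_of_mem {K : Submodule ℝ V} [K.HasOrthogonalProjection] {w : V}
    (hw : w ∈ K) (x : V) : ⟪w, K.starProjection x⟫ = ⟪w, x⟫ := by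
  rw [← inner_starProjection_left_eq_right, starProjection_eq_self_iff.2 hw]

variable [Fintype ι]

/-- The witness is a sum, over `i`, of points of `e` on which `⟪u i, ·⟫` does not vanish. -/
lemma exists_isRelintPoint {e : Set V} (heP : e ⊆ polyhedralCone u) (he0 : (0 : V) ∈ e)
    (hadd : ∀ x ∈ e, ∀ y ∈ e, x + y ∈ e) : ∃ z, IsRelintPoint u e z := by
  classical
  have hwit : ∀ i, ∃ c ∈ e, (∀ y ∈ e, ⟪u i, y⟫ = 0) ∨ ⟪u i, c⟫ ≠ 0 := by
    intro i
    by_cases hi : ∀ y ∈ e, ⟪u i, y⟫ = 0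
    · exact ⟨0, he0, .inl hi⟩
    · obtain ⟨c, hc, hci⟩ := not_forall₂.1 hi
      exact ⟨c, hc, .inr hci⟩
  choose c hce hc using hwit
  have hsum : ∑ j, c j ∈ e :=
    Finset.sum_induction c (· ∈ e) (fun a b ha hb => hadd a ha b hb) he0 fun j _ => hce j
  refine ⟨∑ j, c j, hsum, fun i hi => ?_⟩
  rw [inner_sum, Finset.sum_eq_zero_iff_of_nonpos
    fun j _ => mem_polyhedralCone.1 (heP (hce j)) i] at hi
  exact (hc i).resolve_right fun h => h (hi i (Finset.mem_univ i))

lemma IsRelintPoint.exists_pos_add_smul_mem {e : Set V} {z x : V} (hz : IsRelintPoint u e z)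
    (heP : e ⊆ polyhedralCone u) (hx : x ∈ activeCone u e) :
    ∃ t : ℝ, 0 < t ∧ z + t • x ∈ polyhedralCone u := by
  have hzP := mem_polyhedralCone.1 (heP hz.1)
  have hev : ∀ i, ∀ᶠ t in 𝓝[>] (0 : ℝ), ⟪u i, z + t • x⟫ ≤ 0 := by
    intro i
    by_cases hi : ⟪u i, z⟫ = 0
    · have hxi := mem_activeCone.1 hx i (hz.2 i hi)
      filter_upwards [self_mem_nhdsWithin] with t (ht : 0 < t)
      rw [inner_add_right, inner_smul_right, hi, zero_add]
      exact mul_nonpos_of_nonneg_of_nonpos ht.le hxi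
    · have hcont : Continuous fun t : ℝ => ⟪u i, z + t • x⟫ := by fun_prop
      have hlim := hcont.tendsto 0
      rw [zero_smul, add_zero] at hlim
      exact nhdsWithin_le_nhds
        ((hlim.eventually (gt_mem_nhds (lt_of_le_of_ne (hzP i) hi))).mono fun _ => le_of_lt)
  obtain ⟨t, hmem, ht⟩ := ((Filter.eventually_all.2 hev).and self_mem_nhdsWithin).exists
  exact ⟨t, ht, mem_polyhedralCone.2 hmem⟩

lemma IsRelintPoint.inner_nonpos_of_mem_activeCone {e : Set V} {z w x : V}
    (hz : IsRelintPoint u e z) (heP : e ⊆ polyhedralCone u)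
    (hw : ∀ y ∈ polyhedralCone u, ⟪w, y⟫ ≤ 0) (hwz : ⟪w, z⟫ = 0) (hx : x ∈ activeCone u e) :
    ⟪w, x⟫ ≤ 0 := by
  obtain ⟨t, ht, hmem⟩ := hz.exists_pos_add_smul_mem heP hx
  have := hw _ hmem
  rw [inner_add_right, inner_smul_right, hwz, zero_add] at this
  exact nonpos_of_mul_nonpos_right this ht

lemma IsRelintPoint.mem_span_of_mem_activeCone {e : Set V} {z w x : V}
    (hz : IsRelintPoint u e z) (heP : e ⊆ polyhedralCone u) (hwz : ⟪w, z⟫ = 0)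
    (hx : x ∈ activeCone u e) (hwx : ⟪w, x⟫ = 0) :
    x ∈ span ℝ {y ∈ polyhedralCone u | ⟪w, y⟫ = 0} := by
  obtain ⟨t, ht, hmem⟩ := hz.exists_pos_add_smul_mem heP hx
  refine mem_span_of_add_smul_mem ht.ne' ⟨heP hz.1, hwz⟩ ⟨hmem, ?_⟩
  rw [inner_add_right, inner_smul_right, hwz, hwx, mul_zero, add_zero]

end Polyhedral

section Face

variable {n : ℕ} {C f : Set (EuclideanSpace ℝ (Fin n))}

lemma IsFaceCone.subset (hf : IsFaceCone n C f) : f ⊆ C := by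
  obtain ⟨-, -, w, -, -, rfl⟩ := hf
  exact sep_subset C _

lemma IsFaceCone.zero_mem (hf : IsFaceCone n C f) (hC : 0 ∈ C) : 0 ∈ f := by
  obtain ⟨-, -, w, -, -, rfl⟩ := hf
  exact ⟨hC, inner_zero_right w⟩

lemma IsFaceCone.add_mem (hf : IsFaceCone n C f)
    (hC : ∀ x ∈ C, ∀ y ∈ C, x + y ∈ C) : ∀ x ∈ f, ∀ y ∈ f, x + y ∈ f := by
  obtain ⟨-, -, w, -, -, rfl⟩ := hf
  rintro x ⟨hxC, hxw⟩ y ⟨hyC, hyw⟩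
  exact ⟨hC x hxC y hyC, by rw [inner_add_right, hxw, hyw, add_zero]⟩

lemma isFaceCone_of_span_eq_top {w : EuclideanSpace ℝ (Fin n)} (hC0 : 0 ∈ C) (hC : span ℝ C = ⊤) (hw0 : w ≠ 0)
    (hw : ∀ x ∈ C, ⟪w, x⟫ ≤ 0) : IsFaceCone n C {x ∈ C | ⟪w, x⟫ = 0} := by
  refine ⟨⟨0, hC0, inner_zero_right w⟩, fun hCw => hw0 ?_, w, hw0, hw, rfl⟩
  have hwC : w ∈ (span ℝ C)ᗮ := mem_orthogonal_span_iff.2 fun x hx => (hCw ▸ hx).2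
  rw [hC, top_orthogonal_eq_bot, mem_bot] at hwC
  exact hwC

end Face

section Link

variable {n m : ℕ} {u : Fin m → EuclideanSpace ℝ (Fin n)}

lemma exists_isRelintPoint_of_isFaceCone {f e : Set (EuclideanSpace ℝ (Fin n))}
    (hf : IsFaceCone n (polyhedralCone u) f) (he : IsFaceCone n f e) :
    ∃ z, IsRelintPoint u e z :=
  exists_isRelintPoint (he.subset.trans hf.subset)
    (he.zero_mem (hf.zero_mem zero_mem_polyhedralCone))
    (he.add_mem (hf.add_mem fun _ hx _ hy => add_mem_polyhedralCone hx hy))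

lemma zero_mem_lkCone (e : Set (EuclideanSpace ℝ (Fin n))) : 0 ∈ lkCone n m u e :=
  ⟨mem_activeCone.2 fun i _ => (inner_zero_right (u i)).le, zero_mem _⟩

lemma starProjection_mem_lkCone {e : Set (EuclideanSpace ℝ (Fin n))}
    {x : EuclideanSpace ℝ (Fin n)} (hx : x ∈ activeCone u e) :
    (span ℝ e)ᗮ.starProjection x ∈ lkCone n m u e := by
  refine ⟨mem_activeCone.2 fun i hi => ?_, starProjection_apply_mem _ x⟩
  rw [inner_starProjection_of_mem (mem_orthogonal_span_iff.2 hi)]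
  exact mem_activeCone.1 hx i hi

lemma IsRelintPoint.lkCone_inter_span_eq {e : Set (EuclideanSpace ℝ (Fin n))}
    {z w : EuclideanSpace ℝ (Fin n)} (hz : IsRelintPoint u e z) (heP : e ⊆ polyhedralCone u)
    (hwz : ⟪w, z⟫ = 0) :
    lkCone n m u e ∩ span ℝ {y ∈ polyhedralCone u | ⟪w, y⟫ = 0} =
      {x ∈ lkCone n m u e | ⟪w, x⟫ = 0} := by
  ext x
  refine ⟨fun ⟨hx, hxF⟩ => ⟨hx, ?_⟩,
    fun ⟨hx, hwx⟩ => ⟨hx, hz.mem_span_of_mem_activeCone heP hwz hx.1 hwx⟩⟩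
  exact inner_left_of_mem_orthogonal hxF (mem_orthogonal_span_iff.2 fun y hy => hy.2)

theorem isFaceCone_lkCone_inter_span {f e : Set (EuclideanSpace ℝ (Fin n))}
    (hf : IsFaceCone n (polyhedralCone u) f) (he : IsFaceCone n f e) :
    IsFaceCone n (lkCone n m u e) (lkCone n m u e ∩ span ℝ f) := by
  obtain ⟨z, hz⟩ := exists_isRelintPoint_of_isFaceCone hf he
  have heP := he.subset.trans hf.subset
  obtain ⟨-, hfP, w, hw0, hw, rfl⟩ := hf
  have hwe : w ∈ (span ℝ e)ᗮ := mem_orthogonal_span_iff.2 fun y hy => (he.subset hy).2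
  have hlink := hz.lkCone_inter_span_eq (m := m) heP (he.subset hz.1).2
  refine ⟨⟨0, zero_mem_lkCone e, zero_mem _⟩, fun hA => ?_, w, hw0,
    fun x hx => hz.inner_nonpos_of_mem_activeCone heP hw (he.subset hz.1).2 hx.1, hlink⟩
  obtain ⟨p, hpP, hwp⟩ : ∃ p ∈ polyhedralCone u, ⟪w, p⟫ ≠ 0 := by
    by_contra! h
    exact hfP (Subset.antisymm (sep_subset _ _) fun x hx => ⟨hx, h x hx⟩)
  have hq := starProjection_mem_lkCone (m := m) (polyhedralCone_subset_activeCone e hpP)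
  rw [← hA, hlink] at hq
  exact hwp (inner_starProjection_of_mem hwe p ▸ hq.2)

/-- Projecting onto `L(e)ᗮ` a support vector of a face `g ⊇ f_{(e;P)}` of the link yields a
support vector of a face of `P` containing `f`; maximality of `f` then forces `g = f_{(e;P)}`. -/
theorem isFacetCone_lkCone_inter_span {f e : Set (EuclideanSpace ℝ (Fin n))}
    (hspan : span ℝ (polyhedralCone u) = ⊤) (hf : IsFacetCone n (polyhedralCone u) f)
    (he : IsFaceCone n f e) :
    IsFacetCone n (lkCone n m u e) (lkCone n m u e ∩ span ℝ f) := by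
  refine ⟨isFaceCone_lkCone_inter_span hf.1 he, fun g hg hfg => ?_⟩
  obtain ⟨z, hz⟩ := exists_isRelintPoint_of_isFaceCone hf.1 he
  have hef := he.subset
  have heP := hef.trans hf.1.subset
  obtain ⟨-, hgL, w, -, hw, rfl⟩ := hg
  set K := (span ℝ e)ᗮ
  set w' := K.starProjection w
  have hw'_apply (x) : ⟪w', x⟫ = ⟪w, K.starProjection x⟫ := inner_starProjection_left_eq_right K w x
  have hw'_link : ∀ x ∈ lkCone n m u e, ⟪w', x⟫ = ⟪w, x⟫ := fun x hx => by
    rw [hw'_apply, starProjection_eq_self_iff.2 hx.2]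
  have hg : {x ∈ lkCone n m u e | ⟪w, x⟫ = 0} = {x ∈ lkCone n m u e | ⟪w', x⟫ = 0} :=
    sep_ext_iff.2 fun x hx => by rw [hw'_link x hx]
  have hw'0 : w' ≠ 0 := fun h0 => hgL <|
    Subset.antisymm (sep_subset _ _) fun x hx => ⟨hx, by rw [← hw'_link x hx, h0, inner_zero_left]⟩
  have hface : IsFaceCone n (polyhedralCone u) {x ∈ polyhedralCone u | ⟪w', x⟫ = 0} :=
    isFaceCone_of_span_eq_top zero_mem_polyhedralCone hspan hw'0 fun x hx =>
      hw'_apply x ▸ hw _ (starProjection_mem_lkCone (polyhedralCone_subset_activeCone e hx))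
  have hf_sub : f ⊆ {x ∈ polyhedralCone u | ⟪w', x⟫ = 0} := fun x hx => by
    have hKx : K.starProjection x ∈ span ℝ f := by
      rw [starProjection_orthogonal_val]
      exact sub_mem (subset_span hx) (span_mono hef (starProjection_apply_mem _ x))
    refine ⟨hf.1.subset hx, ?_⟩
    rw [hw'_apply]
    exact (hfg ⟨starProjection_mem_lkCone
      (polyhedralCone_subset_activeCone e (hf.1.subset hx)), hKx⟩).2
  rw [hg, ← hz.lkCone_inter_span_eq heP (hf_sub (hef hz.1)).2, hf.2 _ hface hf_sub]

end Link

theorem stmt13_general (n m : ℕ) (u : Fin m → EuclideanSpace ℝ (Fin n))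
    (P : Set (EuclideanSpace ℝ (Fin n)))
    (hP : P = ⋂ i, {x : EuclideanSpace ℝ (Fin n) | ⟪u i, x⟫ ≤ 0})
    (hfull : Submodule.span ℝ P = ⊤)
    (f e : Set (EuclideanSpace ℝ (Fin n)))
    (hf : IsFaceCone n P f) (he : IsFaceCone n f e) :
    IsFaceCone n (lkCone n m u e)
      (lkCone n m u e ∩ (Submodule.span ℝ f : Set (EuclideanSpace ℝ (Fin n)))) ∧
    (IsFacetCone n P f → IsFacetCone n (lkCone n m u e)
      (lkCone n m u e ∩ (Submodule.span ℝ f : Set (EuclideanSpace ℝ (Fin n))))) := by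
  obtain rfl : P = polyhedralCone u := hP
  exact ⟨isFaceCone_lkCone_inter_span hf he,
    fun hfacet => isFacetCone_lkCone_inter_span hfull hfacet he⟩

/-- For an `n`-dimensional polyhedral cone `P ⊆ ℝⁿ` given by an irredundant
family of halfspaces, a face `f` of `P` and a face `e` of `f`, the set
`f_{(e;P)} = Lk(e;P) ∩ L(f)` is a face of the polytopal cone `Lk(e;P)`; and if `f` is a facet
of `P` then `f_{(e;P)}` is a facet of `Lk(e;P)`. -/
theorem stmt13 (n m : ℕ) (u : Fin m → EuclideanSpace ℝ (Fin n)) (hu : ∀ i, u i ≠ 0)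
    (P : Set (EuclideanSpace ℝ (Fin n)))
    (hP : P = ⋂ i, {x : EuclideanSpace ℝ (Fin n) | ⟪u i, x⟫ ≤ 0})
    (hirr : ∀ i : Fin m,
      (⋂ j ∈ {j : Fin m | j ≠ i}, {x : EuclideanSpace ℝ (Fin n) | ⟪u j, x⟫ ≤ 0}) ≠ P)
    (hfull : Submodule.span ℝ P = ⊤)
    (f e : Set (EuclideanSpace ℝ (Fin n)))
    (hf : IsFaceCone n P f) (he : IsFaceCone n f e) :
    IsFaceCone n (lkCone n m u e)
      (lkCone n m u e ∩ (Submodule.span ℝ f : Set (EuclideanSpace ℝ (Fin n)))) ∧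
    (IsFacetCone n P f → IsFacetCone n (lkCone n m u e)
      (lkCone n m u e ∩ (Submodule.span ℝ f : Set (EuclideanSpace ℝ (Fin n))))) :=
  stmt13_general n m u P hP hfull f e hf he
end
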